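/- Let φ₃(x₁,x₂,x₃) = (x₁-x₂)^{p-2} F(1-p/3, 2-p, 2-2p/3; (x₃-x₂)/(x₁-x₂)), where F is the Gauss hypergeometric series (a polynomial since 2-p is a nonpositive integer for p ≥ 2). Then φ₃ is a symmetric polynomial in (x₁,x₂,x₃). -/

import Mathlib

open MvPolynomial

/-- The Pochhammer symbol (rising factorial) (x)ₙ over ℚ. -/
def pochQ (x : ℚ) : ℕ → ℚ
  | 0 => 1
  | n + 1 => pochQ x n * (x + n)

lemma pochQ_zero (x : ℚ) : pochQ x 0 = 1 := rfl
lemma pochQ_succ (x : ℚ) (n : ℕ) : pochQ x (n + 1) = pochQ x n * (x + n) := rfl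

lemma pochQ_succ_left (x : ℚ) (n : ℕ) : pochQ x (n + 1) = x * pochQ (x + 1) n := by
  induction n with
  | zero => simp [pochQ]
  | succ n ih =>
    rw [pochQ_succ, ih, pochQ_succ]
    push_cast
    ring

lemma pochQ_add (x : ℚ) (m n : ℕ) : pochQ x (m + n) = pochQ x m * pochQ (x + m) n := by
  induction n with
  | zero => simp [pochQ]
  | succ n ih =>
    rw [show m + (n+1) = (m+n)+1 by ring, pochQ_succ, ih, pochQ_succ]
    push_cast
    ring

lemma pochQ_reflect (n : ℕ) : ∀ x : ℚ, pochQ x n = (-1)^n * pochQ (1 - x - n) n := by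
  induction n with
  | zero => simp [pochQ]
  | succ n ih =>
    intro x
    rw [pochQ_succ, ih, pochQ_succ_left]
    have : (1 : ℚ) - x - (n+1 : ℕ) + 1 = 1 - x - n := by push_cast; ring
    rw [this]
    push_cast
    ring

lemma pochQ_ne_zero (x : ℚ) (h : ∀ i : ℕ, x + i ≠ 0) (n : ℕ) : pochQ x n ≠ 0 := by
  induction n with
  | zero => simp [pochQ]
  | succ n ih => exact mul_ne_zero ih (h n)

/-- Chu–Vandermonde as a polynomial identity. -/
lemma vand (m : ℕ) : ∀ x y : ℚ,
    ∑ n ∈ Finset.range (m+1), (-1)^n * (m.choose n : ℚ) * pochQ x n * pochQ (y + n) (m - n)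
      = pochQ (y - x) m := by
  induction m with
  | zero => intro x y; simp [pochQ]
  | succ m ih =>
    intro x y
    rw [Finset.sum_range_succ']
    have key : ∀ n ∈ Finset.range (m+1),
        (-1)^(n+1) * ((m+1).choose (n+1) : ℚ) * pochQ x (n+1) * pochQ (y + (n+1:ℕ)) (m+1-(n+1))
        = ((-1)^(n+1) * (m.choose n : ℚ) * pochQ x (n+1) * pochQ (y + (n+1:ℕ)) (m - n))
          + ((-1)^(n+1) * (m.choose (n+1) : ℚ) * pochQ x (n+1) * pochQ (y + (n+1:ℕ)) (m - n)) := by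
      intro n hn
      rw [Nat.choose_succ_succ]
      simp only [Nat.succ_eq_add_one]
      push_cast
      ring
    rw [Finset.sum_congr rfl key, Finset.sum_add_distrib]
    have hR : pochQ (y - x) (m+1) =
        ∑ n ∈ Finset.range (m+1),
          ((-1)^n * (m.choose n : ℚ) * pochQ x n * pochQ (y + n) (m+1-n)
            - (-1)^n * (m.choose n : ℚ) * pochQ x (n+1) * pochQ (y + ((n+1:ℕ):ℚ)) (m-n)) := by
      rw [pochQ_succ_left, show y - x + 1 = (y+1) - x by ring, ← ih x (y+1), Finset.mul_sum]
      apply Finset.sum_congr rfl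
      intro n hn
      have hn' : n ≤ m := Nat.lt_succ_iff.mp (Finset.mem_range.mp hn)
      rw [show m + 1 - n = (m - n) + 1 by omega, pochQ_succ_left (y + n) (m-n),
        pochQ_succ x n]
      have h2 : y + 1 + (n:ℚ) = y + (n:ℚ) + 1 := by ring
      have h3 : y + ((n+1:ℕ):ℚ) = y + (n:ℚ) + 1 := by push_cast; ring
      rw [h2, h3]
      ring
    rw [hR, Finset.sum_sub_distrib]
    have e1 : ∑ n ∈ Finset.range (m+1),
        (-1)^(n+1) * (m.choose n : ℚ) * pochQ x (n+1) * pochQ (y + ((n+1:ℕ):ℚ)) (m - n)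
        = - ∑ n ∈ Finset.range (m+1),
            (-1)^n * (m.choose n : ℚ) * pochQ x (n+1) * pochQ (y + ((n+1:ℕ):ℚ)) (m-n) := by
      rw [← Finset.sum_neg_distrib]
      apply Finset.sum_congr rfl
      intro n _
      ring
    have e2 : ∑ n ∈ Finset.range (m+1),
        (-1)^(n+1) * (m.choose (n+1) : ℚ) * pochQ x (n+1) * pochQ (y + ((n+1:ℕ):ℚ)) (m - n)
        + (-1)^0 * ((m+1).choose 0 : ℚ) * pochQ x 0 * pochQ (y + ((0:ℕ):ℚ)) (m+1-0)
        = ∑ n ∈ Finset.range (m+1),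
            (-1)^n * (m.choose n : ℚ) * pochQ x n * pochQ (y + n) (m+1-n) := by
      rw [Finset.sum_range_succ' (fun n => (-1)^n * (m.choose n : ℚ) * pochQ x n * pochQ (y + n) (m+1-n)) m]
      congr 1
      · rw [Finset.sum_range_succ]
        simp only [Nat.choose_succ_self, Nat.cast_zero, mul_zero, zero_mul, add_zero]
        apply Finset.sum_congr rfl
        intro i hi
        rw [show m + 1 - (i+1) = m - i by omega]
      · simp [pochQ]
    rw [e1, add_assoc, e2]
    ring

/-- The coefficient cₙ. -/
noncomputable def cc (p n : ℕ) : ℚ :=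
  pochQ (1 - p / 3) n * pochQ (2 - p) n / (pochQ (2 - 2 * p / 3) n * (n.factorial : ℚ))

section Arith

variable (p : ℕ) (hp : 4 ≤ p) (h3 : ¬ (3 ∣ p))

/-- a = 1 - p/3 -/
noncomputable def aQ (p : ℕ) : ℚ := 1 - (p : ℚ) / 3

lemma two_a (p : ℕ) : (2 : ℚ) - 2 * p / 3 = 2 * aQ p := by unfold aQ; ring

include h3 in
lemma apoch_ne (k n : ℕ) : pochQ (aQ p + k) n ≠ 0 := by
  apply pochQ_ne_zero
  intro i h
  apply h3
  have hp' : (p : ℚ) = 3 * (1 + k + i) := by unfold aQ at h; field_simp at h ⊢; linarith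
  have : p = 3 * (1 + k + i) := by exact_mod_cast hp'
  omega

include h3 in
lemma bpoch_ne (k n : ℕ) : pochQ (2 * aQ p + k) n ≠ 0 := by
  apply pochQ_ne_zero
  intro i h
  apply h3
  have hp' : 2 * (p : ℚ) = 3 * (2 + k + i) := by unfold aQ at h; field_simp at h ⊢; linarith
  have : 2 * p = 3 * (2 + k + i) := by exact_mod_cast hp'
  omega

lemma negpoch (M : ℕ) : ∀ n ≤ M, pochQ (-(M:ℚ)) n = (-1)^n * (n.factorial : ℚ) * (M.choose n) := by
  intro n
  induction n with
  | zero => intro _; simp [pochQ_zero]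
  | succ n ih =>
    intro h
    rw [pochQ_succ, ih (by omega)]
    have h1 : ((M.choose (n+1) : ℚ)) * (n+1) = (M.choose n : ℚ) * ((M : ℚ) - n) := by
      have := Nat.choose_succ_right_eq M n
      have hc : ((M.choose (n+1) * (n+1) : ℕ) : ℚ) = ((M.choose n * (M - n) : ℕ) : ℚ) := by
        exact_mod_cast congrArg (Nat.cast : ℕ → ℚ) this
      push_cast [Nat.cast_sub (by omega : n ≤ M)] at hc
      exact_mod_cast hc
    have h2 : (((n+1).factorial : ℕ) : ℚ) = (n.factorial : ℚ) * (n+1) := by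
      push_cast [Nat.factorial_succ]; ring
    rw [h2]
    calc (-1)^n * (n.factorial : ℚ) * (M.choose n) * (-(M:ℚ) + n)
        = (-1)^(n+1) * (n.factorial : ℚ) * ((M.choose n : ℚ) * ((M:ℚ) - n)) := by ring
      _ = (-1)^(n+1) * (n.factorial : ℚ) * ((M.choose (n+1) : ℚ) * (n+1)) := by rw [← h1]
      _ = (-1)^(n+1) * ((n.factorial : ℚ) * (n+1)) * (M.choose (n+1)) := by ring

include hp h3 in
lemma cc_eq (n : ℕ) (hn : n ≤ p - 2) :
    cc p n = (-1)^n * ((p-2).choose n : ℚ) * (pochQ (aQ p) n / pochQ (2 * aQ p) n) := by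
  unfold cc
  rw [two_a]
  have h2p : (2 : ℚ) - p = -(((p-2 : ℕ) : ℚ)) := by
    push_cast [Nat.cast_sub (by omega : 2 ≤ p)]; ring
  rw [h2p, negpoch (p-2) n hn, show (1 - (p:ℚ)/3) = aQ p from rfl]
  have hfac : (n.factorial : ℚ) ≠ 0 := by exact_mod_cast Nat.factorial_ne_zero n
  have hbn : pochQ (2 * aQ p) n ≠ 0 := by
    have := bpoch_ne p h3 0 n; simpa using this
  field_simp

include h3 in
/-- Identity B': ∑ (-1)^n C(m,n) rₙ = rₘ. -/
lemma idB' (m : ℕ) :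
    ∑ n ∈ Finset.range (m+1), (-1)^n * (m.choose n : ℚ) *
      (pochQ (aQ p) n / pochQ (2 * aQ p) n)
    = pochQ (aQ p) m / pochQ (2 * aQ p) m := by
  have hne : pochQ (2 * aQ p) m ≠ 0 := by
    have := bpoch_ne p h3 0 m; simpa using this
  rw [eq_div_iff hne, Finset.sum_mul]
  have hV := vand m (aQ p) (2 * aQ p)
  rw [show 2 * aQ p - aQ p = aQ p by ring] at hV
  rw [← hV]
  apply Finset.sum_congr rfl
  intro n hn
  have hnm : n ≤ m := Nat.lt_succ_iff.mp (Finset.mem_range.mp hn)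
  have hsplit : pochQ (2 * aQ p) m = pochQ (2 * aQ p) n * pochQ (2 * aQ p + n) (m - n) := by
    rw [← pochQ_add]
    congr 1
    omega
  have hne2 : pochQ (2 * aQ p) n ≠ 0 := by
    have := bpoch_ne p h3 0 n; simpa using this
  rw [hsplit]
  field_simp

include hp h3 in
/-- Identity B. -/
lemma idB (m : ℕ) (hm : m ≤ p - 2) :
    ∑ n ∈ Finset.range (m+1), (-1)^m * (((p-2-n).choose (m-n)) : ℚ) * cc p n = cc p m := by
  have key : ∀ n ∈ Finset.range (m+1),
      (-1)^m * (((p-2-n).choose (m-n)) : ℚ) * cc p n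
      = ((-1)^m * (((p-2).choose m) : ℚ)) *
        ((-1)^n * (m.choose n : ℚ) * (pochQ (aQ p) n / pochQ (2 * aQ p) n)) := by
    intro n hn
    have hnm : n ≤ m := Nat.lt_succ_iff.mp (Finset.mem_range.mp hn)
    rw [cc_eq p hp h3 n (le_trans hnm hm)]
    have hc := Nat.choose_mul (n := p-2) (k := m) hnm
    have hcq : (((p-2).choose m : ℚ)) * ((m.choose n : ℚ)) =
        (((p-2).choose n : ℚ)) * (((p-2-n).choose (m-n) : ℚ)) := by exact_mod_cast hc
    linear_combination (-((-1:ℚ))^m * ((-1:ℚ))^n * (pochQ (aQ p) n / pochQ (2 * aQ p) n)) * hcq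
  rw [Finset.sum_congr rfl key, ← Finset.mul_sum, idB' p h3 m, cc_eq p hp h3 m hm]

include hp h3 in
/-- Identity A. -/
lemma idA (k : ℕ) (hk : k ≤ p - 2) :
    ∑ n ∈ Finset.range (p-2+1), (n.choose k : ℚ) * cc p n = (-1)^(p-2-k) * cc p k := by
  set N := p - 2 - k with hN
  set A := aQ p with hA
  have step0 : ∑ n ∈ Finset.range (p-2+1), (n.choose k : ℚ) * cc p n
      = ∑ j ∈ Finset.range (N+1), (((k+j).choose k : ℚ)) * cc p (k+j) := by
    rw [Finset.range_eq_Ico,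
      ← Finset.sum_Ico_consecutive _ (Nat.zero_le k) (by omega : k ≤ p-2+1)]
    have h0 : ∑ n ∈ Finset.Ico 0 k, (n.choose k : ℚ) * cc p n = 0 := by
      apply Finset.sum_eq_zero
      intro n hn
      have : n < k := (Finset.mem_Ico.mp hn).2
      simp [Nat.choose_eq_zero_of_lt this]
    rw [h0, zero_add, Finset.sum_Ico_eq_sum_range,
      show p - 2 + 1 - k = N + 1 by omega]
  have hNcast : ((N : ℕ) : ℚ) = (p:ℚ) - 2 - k := by
    rw [hN]
    push_cast [Nat.cast_sub hk, Nat.cast_sub (show 2 ≤ p by omega)]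
    ring
  have hrefl : pochQ (2*A + k) N = (-1)^N * pochQ A N := by
    rw [pochQ_reflect N (2*A + k),
      show (1:ℚ) - (2*A + k) - N = A by rw [hNcast, hA]; unfold aQ; ring]
  have hneN : pochQ (2*A + k) N ≠ 0 := bpoch_ne p h3 k N
  have hv := vand N (A + k) (2*A + k)
  rw [show 2*A + (k:ℚ) - (A + k) = A by ring] at hv
  have S2 : ∑ j ∈ Finset.range (N+1),
      (-1)^j * (N.choose j : ℚ) * (pochQ (A + k) j / pochQ (2*A + k) j) = (-1)^N := by
    have hq : ((-1:ℚ))^N = pochQ A N / pochQ (2*A + k) N := by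
      rw [eq_div_iff hneN, hrefl, ← mul_assoc, ← mul_pow]
      norm_num
    rw [hq, eq_div_iff hneN, Finset.sum_mul, ← hv]
    apply Finset.sum_congr rfl
    intro j hj
    have hjN : j ≤ N := Nat.lt_succ_iff.mp (Finset.mem_range.mp hj)
    have hsplit : pochQ (2*A + k) N = pochQ (2*A + k) j * pochQ (2*A + k + j) (N - j) := by
      rw [← pochQ_add]
      congr 1
      omega
    have hne2 : pochQ (2*A + k) j ≠ 0 := bpoch_ne p h3 k j
    rw [hsplit]
    have hc := div_mul_cancel₀ (pochQ (A + k) j) hne2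
    linear_combination ((-1:ℚ)^j * (N.choose j : ℚ) * pochQ (2*A + k + j) (N - j)) * hc
  have key : ∀ j ∈ Finset.range (N+1),
      (((k+j).choose k : ℚ)) * cc p (k+j)
      = ((-1)^k * (((p-2).choose k) : ℚ) * (pochQ A k / pochQ (2*A) k)) *
        ((-1)^j * (N.choose j : ℚ) * (pochQ (A + k) j / pochQ (2*A + k) j)) := by
    intro j hj
    have hjN : j ≤ N := Nat.lt_succ_iff.mp (Finset.mem_range.mp hj)
    have hkj : k + j ≤ p - 2 := by omega
    rw [cc_eq p hp h3 (k+j) hkj]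
    have hc := Nat.choose_mul (n := p-2) (k := k+j) (Nat.le_add_right k j)
    rw [show k + j - k = j by omega, ← hN] at hc
    have hcq : (((p-2).choose (k+j) : ℚ)) * (((k+j).choose k : ℚ)) =
        (((p-2).choose k : ℚ)) * ((N.choose j : ℚ)) := by exact_mod_cast hc
    have hsa : pochQ A (k+j) = pochQ A k * pochQ (A + k) j := pochQ_add A k j
    have hsb : pochQ (2*A) (k+j) = pochQ (2*A) k * pochQ (2*A + k) j := pochQ_add (2*A) k j
    have hb1 : pochQ (2*A) k ≠ 0 := by have := bpoch_ne p h3 0 k; simpa using this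
    have hb2 : pochQ (2*A + k) j ≠ 0 := bpoch_ne p h3 k j
    rw [hsa, hsb]
    field_simp
    linear_combination ((-1:ℚ))^k * ((-1:ℚ))^j * pochQ A k * pochQ (A + k) j / (pochQ (A*2) k * pochQ (A*2 + k) j) * hcq
  rw [step0, Finset.sum_congr rfl key, ← Finset.mul_sum, S2, cc_eq p hp h3 k hk, ← hA]
  ring

end Arith


section Poly

variable {R : Type*} [CommRing R]


lemma L23 (q : ℕ) (d : ℕ → R) (A B : R) :
    ∑ n ∈ Finset.range (q+1), d n * (A - B)^(q-n) * (-B)^n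
    = ∑ m ∈ Finset.range (q+1),
        (∑ n ∈ Finset.range (m+1), (-1)^m * ((q-n).choose (m-n) : R) * d n)
          * A^(q-m) * B^m := by
  have e1 : ∑ n ∈ Finset.range (q+1), d n * (A - B)^(q-n) * (-B)^n
      = ∑ n ∈ Finset.range (q+1), ∑ i ∈ Finset.range (q+1),
          d n * ((q-n).choose i : R) * A^i * (-B)^(q-i) := by
    apply Finset.sum_congr rfl
    intro n hn
    have hnq : n ≤ q := Nat.lt_succ_iff.mp (Finset.mem_range.mp hn)
    rw [sub_eq_add_neg, add_pow, Finset.mul_sum, Finset.sum_mul]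
    rw [← Finset.sum_subset (Finset.range_subset_range.mpr (by omega : q-n+1 ≤ q+1))
      (fun i _ hi => by
        have : q - n < i := by
          simp only [Finset.mem_range, not_lt] at hi
          omega
        simp [Nat.choose_eq_zero_of_lt this])]
    apply Finset.sum_congr rfl
    intro i hi
    have hiq : i ≤ q - n := Nat.lt_succ_iff.mp (Finset.mem_range.mp hi)
    have hpow : (-B)^(q-n-i) * (-B)^n = (-B)^(q-i) := by
      rw [← pow_add]
      congr 1
      omega
    rw [← hpow]
    ring
  rw [e1, Finset.sum_comm, ← Finset.sum_range_reflect]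
  apply Finset.sum_congr rfl
  intro m hm
  have hmq : m ≤ q := Nat.lt_succ_iff.mp (Finset.mem_range.mp hm)
  rw [show q + 1 - 1 - m = q - m by omega, Finset.sum_mul, Finset.sum_mul]
  rw [← Finset.sum_subset (Finset.range_subset_range.mpr (by omega : m+1 ≤ q+1))
    (fun n hn hn2 => by
      have h1 : m < n := by
        simp only [Finset.mem_range, not_lt] at hn2
        omega
      have h2 : n ≤ q := Nat.lt_succ_iff.mp (Finset.mem_range.mp hn)
      have : q - n < q - m := by omega
      simp [Nat.choose_eq_zero_of_lt this])]
  apply Finset.sum_congr rfl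
  intro n hn
  have hnm : n ≤ m := Nat.lt_succ_iff.mp (Finset.mem_range.mp hn)
  have hc : (q-n).choose (q-m) = (q-n).choose (m-n) := by
    rw [show q - m = (q-n) - (m-n) by omega]
    exact Nat.choose_symm (by omega)
  rw [hc, show q - (q - m) = m by omega, neg_pow B m]
  ring

lemma L12 (q : ℕ) (d : ℕ → R) (A B : R) :
    ∑ n ∈ Finset.range (q+1), d n * (-A)^(q-n) * (B - A)^n
    = ∑ k ∈ Finset.range (q+1),
        ((-1)^(q-k) * ∑ n ∈ Finset.range (q+1), (n.choose k : R) * d n)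
          * A^(q-k) * B^k := by
  have e1 : ∑ n ∈ Finset.range (q+1), d n * (-A)^(q-n) * (B - A)^n
      = ∑ n ∈ Finset.range (q+1), ∑ k ∈ Finset.range (q+1),
          d n * (n.choose k : R) * B^k * (-A)^(q-k) := by
    apply Finset.sum_congr rfl
    intro n hn
    have hnq : n ≤ q := Nat.lt_succ_iff.mp (Finset.mem_range.mp hn)
    rw [sub_eq_add_neg, add_pow, Finset.mul_sum]
    rw [← Finset.sum_subset (Finset.range_subset_range.mpr (by omega : n+1 ≤ q+1))
      (fun k _ hk => by
        have : n < k := by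
          simp only [Finset.mem_range, not_lt] at hk
          omega
        simp [Nat.choose_eq_zero_of_lt this])]
    apply Finset.sum_congr rfl
    intro k hk
    have hkn : k ≤ n := Nat.lt_succ_iff.mp (Finset.mem_range.mp hk)
    have hpow : (-A)^(q-n) * (-A)^(n-k) = (-A)^(q-k) := by
      rw [← pow_add]
      congr 1
      omega
    rw [← hpow]
    ring
  rw [e1, Finset.sum_comm]
  apply Finset.sum_congr rfl
  intro k hk
  have hkq : k ≤ q := Nat.lt_succ_iff.mp (Finset.mem_range.mp hk)
  rw [Finset.mul_sum, Finset.sum_mul, Finset.sum_mul]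
  apply Finset.sum_congr rfl
  intro n hn
  rw [neg_pow A (q-k)]
  ring

end Poly

/-- φ₃(x₁,x₂,x₃) = (x₁-x₂)^{p-2} F(1-p/3, 2-p, 2-2p/3; (x₃-x₂)/(x₁-x₂)), expanded as a
polynomial: since 2-p is a nonpositive integer, F is a polynomial of degree ≤ p-2 in z, and
(x₁-x₂)^{p-2} F(z) = ∑_{n=0}^{p-2} cₙ (x₁-x₂)^{p-2-n} (x₃-x₂)ⁿ with cₙ the series coefficients. -/
noncomputable def phi3 (p : ℕ) : MvPolynomial (Fin 3) ℚ :=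
  ∑ n ∈ Finset.range (p - 1),
    C (pochQ (1 - p / 3) n * pochQ (2 - p) n /
        (pochQ (2 - 2 * p / 3) n * (n.factorial : ℚ)))
      * (X 0 - X 1) ^ (p - 2 - n) * (X 2 - X 1) ^ n

lemma phi3_eq (p : ℕ) (hp : 4 ≤ p) :
    phi3 p = ∑ n ∈ Finset.range ((p-2)+1),
      C (cc p n) * (X 0 - X 1)^((p-2)-n) * (X 2 - X 1)^n := by
  unfold phi3 cc
  rw [show p - 1 = (p-2)+1 by omega]

/-- φ₃ is a symmetric polynomial in (x₁,x₂,x₃). -/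
theorem stmt9 (p : ℕ) (hp : 4 ≤ p) (h3 : ¬ (3 ∣ p)) : (phi3 p).IsSymmetric := by
  have coefB : ∀ m, m ∈ Finset.range ((p-2)+1) →
      (∑ n ∈ Finset.range (m+1),
          (-1)^m * (((p-2)-n).choose (m-n) : MvPolynomial (Fin 3) ℚ) * C (cc p n))
        = C (cc p m) := by
    intro m hm
    have hm' : m ≤ p - 2 := Nat.lt_succ_iff.mp (Finset.mem_range.mp hm)
    rw [show (C (cc p m) : MvPolynomial (Fin 3) ℚ)
        = C (∑ n ∈ Finset.range (m+1), (-1)^m * (((p-2-n).choose (m-n)) : ℚ) * cc p n) by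
      rw [idB p hp h3 m hm'], map_sum]
    apply Finset.sum_congr rfl
    intro n hn
    rw [map_mul, map_mul, map_pow, map_neg, map_one, map_natCast]
  have coefA : ∀ k, k ∈ Finset.range ((p-2)+1) →
      ((-1)^((p-2)-k) * ∑ n ∈ Finset.range ((p-2)+1),
          ((n.choose k : MvPolynomial (Fin 3) ℚ)) * C (cc p n))
        = C (cc p k) := by
    intro k hk
    have hk' : k ≤ p - 2 := Nat.lt_succ_iff.mp (Finset.mem_range.mp hk)
    have h1 : ∑ n ∈ Finset.range ((p-2)+1),
        ((n.choose k : MvPolynomial (Fin 3) ℚ)) * C (cc p n)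
        = C (∑ n ∈ Finset.range ((p-2)+1), (n.choose k : ℚ) * cc p n) := by
      rw [map_sum]
      apply Finset.sum_congr rfl
      intro n hn
      rw [map_mul, map_natCast]
    rw [h1, idA p hp h3 k hk',
      show ((-1 : MvPolynomial (Fin 3) ℚ))^((p-2)-k) = C ((-1 : ℚ)^((p-2)-k)) by
        rw [map_pow, map_neg, map_one],
      ← map_mul, ← mul_assoc, ← mul_pow]
    norm_num
  -- invariance under the swap (1 2)
  have h12 : rename (Equiv.swap (1 : Fin 3) 2) (phi3 p) = phi3 p := by
    conv_lhs => rw [phi3_eq p hp]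
    rw [map_sum]
    have step : ∀ n ∈ Finset.range ((p-2)+1),
        rename (Equiv.swap (1 : Fin 3) 2)
            (C (cc p n) * (X 0 - X 1)^((p-2)-n) * (X 2 - X 1)^n)
          = C (cc p n) * ((X 0 - X 1) - (X 2 - X 1))^((p-2)-n) * (-(X 2 - X 1))^n := by
      intro n _
      simp only [map_mul, map_pow, map_sub, rename_C, rename_X]
      rw [show (Equiv.swap (1 : Fin 3) 2) 0 = 0 by decide,
        show (Equiv.swap (1 : Fin 3) 2) 1 = 2 by decide,
        show (Equiv.swap (1 : Fin 3) 2) 2 = 1 by decide,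
        show (X 0 - X 2 : MvPolynomial (Fin 3) ℚ) = (X 0 - X 1) - (X 2 - X 1) by ring,
        show (X 1 - X 2 : MvPolynomial (Fin 3) ℚ) = -(X 2 - X 1) by ring]
    rw [Finset.sum_congr rfl step,
      L23 (p-2) (fun n => C (cc p n)) (X 0 - X 1) (X 2 - X 1),
      Finset.sum_congr rfl (fun m hm => by rw [coefB m hm]), ← phi3_eq p hp]
  -- invariance under the swap (0 1)
  have h01 : rename (Equiv.swap (0 : Fin 3) 1) (phi3 p) = phi3 p := by
    conv_lhs => rw [phi3_eq p hp]
    rw [map_sum]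
    have step : ∀ n ∈ Finset.range ((p-2)+1),
        rename (Equiv.swap (0 : Fin 3) 1)
            (C (cc p n) * (X 0 - X 1)^((p-2)-n) * (X 2 - X 1)^n)
          = C (cc p n) * (-(X 0 - X 1))^((p-2)-n) * ((X 2 - X 1) - (X 0 - X 1))^n := by
      intro n _
      simp only [map_mul, map_pow, map_sub, rename_C, rename_X]
      rw [show (Equiv.swap (0 : Fin 3) 1) 0 = 1 by decide,
        show (Equiv.swap (0 : Fin 3) 1) 1 = 0 by decide,
        show (Equiv.swap (0 : Fin 3) 1) 2 = 2 by decide,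
        show (X 1 - X 0 : MvPolynomial (Fin 3) ℚ) = -(X 0 - X 1) by ring,
        show (X 2 - X 0 : MvPolynomial (Fin 3) ℚ) = (X 2 - X 1) - (X 0 - X 1) by ring]
    rw [Finset.sum_congr rfl step,
      L12 (p-2) (fun n => C (cc p n)) (X 0 - X 1) (X 2 - X 1),
      Finset.sum_congr rfl (fun k hk => by rw [coefA k hk]), ← phi3_eq p hp]
  -- all of S₃ is generated by the two swaps
  intro σ
  have hσ : σ = 1 ∨ σ = Equiv.swap 0 1 ∨ σ = Equiv.swap 1 2 ∨
      σ = (Equiv.swap 0 1).trans (Equiv.swap 1 2) ∨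
      σ = (Equiv.swap 1 2).trans (Equiv.swap 0 1) ∨
      σ = ((Equiv.swap 0 1).trans (Equiv.swap 1 2)).trans (Equiv.swap 0 1) := by
    revert σ
    decide
  rcases hσ with h | h | h | h | h | h <;> subst h
  · simp [rename_id]
  · exact h01
  · exact h12
  · rw [Equiv.coe_trans, ← rename_rename, h01, h12]
  · rw [Equiv.coe_trans, ← rename_rename, h12, h01]
  · rw [Equiv.coe_trans, ← rename_rename, Equiv.coe_trans, ← rename_rename, h01, h12, h01]
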